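/- Let γ(t) = e^{-i c t}·γ_R(t) be the sub-Riemannian geodesic in S³ with γ(0) = p, where γ_R is the great circle with initial velocity v ∈ T_p S³ and c = ⟨v, V(p)⟩ with V(p) = i·p. Writing α = ⟨v, X(p)⟩ and β = ⟨v, Y(p)⟩ for the orthonormal horizontal frame X, Y on S³, one has γ̇(t) = f_X(t) X(γ(t)) + f_Y(t) Y(γ(t)), where f_X(t) = α cos(2ct) + β sin(2ct) and f_Y(t) = β cos(2ct) − α sin(2ct). -/

import Mathlib

/-!
In the ℂ-orthonormal frame `{p, X p}` (the map `X` is conjugate-linear with `X ∘ X = -1`) the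
hypotheses say `v = i c p + z X p` with `z = α + i β`, so `‖v‖² = c² + |z|²`. With this relation
the great circle `γ_R` satisfies `γ̇_R - i c γ_R = z X(γ_R)`, and since `X(e^{-ict} q) = e^{ict} X q`,
`γ̇ = e^{-ict} (γ̇_R - i c γ_R) = z e^{-2ict} X(γ)`. As `Y = i X`, the coordinates `f_X, f_Y` are the
real and imaginary parts of `z e^{-2ict}`.
-/

open Complex ComplexConjugate

lemma inner_eq_re_add_re_smul_I {E : Type*} [NormedAddCommGroup E] [InnerProductSpace ℂ E]
    (x y : E) : inner ℂ y x = (inner ℂ x y).re + (inner ℂ x (I • y)).re * I := by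
  rw [inner_smul_right]
  apply Complex.ext
  · simpa using inner_re_symm (𝕜 := ℂ) y x
  · simpa using inner_im_symm (𝕜 := ℂ) y x

lemma ofReal_cos_add_sin_mul_I (α β θ : ℝ) :
    ((α * Real.cos θ + β * Real.sin θ : ℝ) : ℂ) + ((β * Real.cos θ - α * Real.sin θ : ℝ) : ℂ) * I
      = (α + β * I) * cexp (-θ * I) := by
  rw [← ofReal_neg, exp_mul_I, ← ofReal_cos, ← ofReal_sin, Real.cos_neg, Real.sin_neg]
  push_cast
  linear_combination (β * Complex.sin θ) * I_sq

section Curves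

variable {E : Type*} [NormedAddCommGroup E] [NormedSpace ℂ E]

noncomputable def greatCircle (p v : E) (t : ℝ) : E :=
  (Real.cos (‖v‖ * t) : ℂ) • p + ((Real.sin (‖v‖ * t) / ‖v‖ : ℝ) : ℂ) • v

lemma hasDerivAt_greatCircle (p v : E) (t : ℝ) :
    HasDerivAt (greatCircle p v)
      (((-(‖v‖ * Real.sin (‖v‖ * t)) : ℝ) : ℂ) • p + (Real.cos (‖v‖ * t) : ℂ) • v) t := by
  rcases eq_or_ne v 0 with rfl | hv
  · have h : greatCircle p (0 : E) = fun _ => p := by funext; simp [greatCircle]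
    simpa [h] using hasDerivAt_const t p
  have hcos : HasDerivAt (fun t : ℝ => ((Real.cos (‖v‖ * t) : ℝ) : ℂ))
      ((-(‖v‖ * Real.sin (‖v‖ * t)) : ℝ) : ℂ) t := by
    simpa [mul_comm] using ((hasDerivAt_id t).const_mul ‖v‖).cos.ofReal_comp
  have hsin : HasDerivAt (fun t : ℝ => ((Real.sin (‖v‖ * t) / ‖v‖ : ℝ) : ℂ))
      ((Real.cos (‖v‖ * t) : ℝ) : ℂ) t := by
    have h := (((hasDerivAt_id t).const_mul ‖v‖).sin.div_const ‖v‖).ofReal_comp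
    rwa [id_eq, mul_one, mul_div_cancel_right₀ _ (norm_ne_zero_iff.mpr hv)] at h
  exact (hcos.smul_const p).add (hsin.smul_const v)

lemma HasDerivAt.cexp_neg_mul_I_smul {f : ℝ → E} {f' : E} {t : ℝ} (hf : HasDerivAt f f' t)
    (c : ℝ) :
    HasDerivAt (fun t : ℝ => cexp (-(c * t) * I) • f t)
      (cexp (-(c * t) * I) • (f' - ((c : ℂ) * I) • f t)) t := by
  have he : HasDerivAt (fun t : ℝ => cexp (-(c * t) * I)) (cexp (-(c * t) * I) * (-c * I)) t := by
    have h : HasDerivAt (fun t : ℝ => ((-(c * t) : ℝ) : ℂ)) (-c : ℝ) t := by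
      simpa using ((hasDerivAt_id t).const_mul c).neg.ofReal_comp
    simpa using (h.mul_const I).cexp
  refine (he.smul hf).congr_deriv ?_
  module

end Curves

section FrameX

/-- The horizontal field `X`: left multiplication by `j` under `ℂ² ≅ ℍ`, `(q₀, q₁) ↦ q₀ + q₁ j`. -/
def frameX (q : EuclideanSpace ℂ (Fin 2)) : EuclideanSpace ℂ (Fin 2) :=
  !₂[-conj (q 1), conj (q 0)]

variable (q : EuclideanSpace ℂ (Fin 2))

@[simp] lemma frameX_apply_zero : frameX q 0 = -conj (q 1) := rfl

@[simp] lemma frameX_apply_one : frameX q 1 = conj (q 0) := rfl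

lemma frameX_add (r : EuclideanSpace ℂ (Fin 2)) : frameX (q + r) = frameX q + frameX r := by
  ext i; fin_cases i <;> simp [add_comm]

lemma frameX_smul (a : ℂ) : frameX (a • q) = conj a • frameX q := by
  ext i; fin_cases i <;> simp

lemma frameX_frameX : frameX (frameX q) = -q := by
  ext i; fin_cases i <;> simp

lemma inner_self_frameX : inner ℂ q (frameX q) = 0 := by
  simp [PiLp.inner_apply, Fin.sum_univ_two]; ring

lemma norm_frameX : ‖frameX q‖ = ‖q‖ := by
  simp [EuclideanSpace.norm_eq, Fin.sum_univ_two, add_comm]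

lemma norm_sq_smul_eq_inner_smul_add_inner_smul_frameX (v : EuclideanSpace ℂ (Fin 2)) :
    (‖q‖ : ℂ) ^ 2 • v = inner ℂ q v • q + inner ℂ (frameX q) v • frameX q := by
  have hq : (‖q‖ : ℂ) ^ 2 = conj (q 0) * q 0 + conj (q 1) * q 1 := by
    rw [show (‖q‖ : ℂ) ^ 2 = inner ℂ q q from (inner_self_eq_norm_sq_to_K q).symm]
    simp only [PiLp.inner_apply, RCLike.inner_apply, Fin.sum_univ_two]; ring
  ext i; fin_cases i <;> simp [hq, PiLp.inner_apply, Fin.sum_univ_two] <;> ring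

lemma norm_smul_add_smul_frameX_sq (a b : ℂ) :
    ‖a • q + b • frameX q‖ ^ 2 = (‖a‖ ^ 2 + ‖b‖ ^ 2) * ‖q‖ ^ 2 := by
  have h : inner ℂ (a • q) (b • frameX q) = 0 := by
    rw [inner_smul_left, inner_smul_right, inner_self_frameX, mul_zero, mul_zero]
  rw [norm_add_sq (𝕜 := ℂ), h, norm_smul, norm_smul, norm_frameX]
  simp only [map_zero, mul_zero, add_zero]
  ring

end FrameX

lemma velocity_sub_smul_greatCircle_eq_smul_frameX {p v : EuclideanSpace ℂ (Fin 2)}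
    (hp : ‖p‖ = 1) {c : ℝ} {z : ℂ} (hv : v = ((c : ℂ) * I) • p + z • frameX p) (t : ℝ) :
    ((-(‖v‖ * Real.sin (‖v‖ * t)) : ℝ) : ℂ) • p + (Real.cos (‖v‖ * t) : ℂ) • v
      - ((c : ℂ) * I) • greatCircle p v t = z • frameX (greatCircle p v t) := by
  have hω : (‖v‖ : ℂ) ^ 2 = c ^ 2 + z * conj z := by
    have h := norm_smul_add_smul_frameX_sq p ((c : ℂ) * I) z
    rw [← hv, hp, norm_mul, norm_I, norm_real, Real.norm_eq_abs, mul_one, one_pow, mul_one,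
      sq_abs] at h
    rw [mul_conj']
    exact_mod_cast h
  rw [greatCircle]
  generalize ‖v‖ = ω at hω ⊢
  subst hv
  have hsin : Real.sin (ω * t) = ω * (Real.sin (ω * t) / ω) := by
    rcases eq_or_ne ω 0 with h | h
    · simp [h]
    · exact (mul_div_cancel₀ _ h).symm
  set s := Real.sin (ω * t) / ω
  rw [hsin]
  simp only [frameX_add, frameX_smul, frameX_frameX, map_mul, conj_ofReal, conj_I]
  linear_combination (norm := module) (-(s : ℂ)) • hω • p - ((s * c ^ 2 : ℝ) : ℂ) • I_sq • p

theorem s3_geodesic_velocity_frame_general (p v : EuclideanSpace ℂ (Fin 2)) (hp : ‖p‖ = 1)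
    (htan : (inner ℂ v p : ℂ).re = 0)
    (Xf Yf : EuclideanSpace ℂ (Fin 2) → EuclideanSpace ℂ (Fin 2))
    (hXf : ∀ q, Xf q = ![-(starRingEnd ℂ) (q 1), (starRingEnd ℂ) (q 0)])
    (hYf : ∀ q, Yf q = Complex.I • Xf q)
    (c α β : ℝ)
    (hc : c = (inner ℂ v (Complex.I • p) : ℂ).re)
    (hα : α = (inner ℂ v (Xf p) : ℂ).re)
    (hβ : β = (inner ℂ v (Yf p) : ℂ).re)
    (γ : ℝ → EuclideanSpace ℂ (Fin 2))
    (hγ : ∀ t, γ t = Complex.exp (-(c * t) * Complex.I) •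
      ((Real.cos (‖v‖ * t) : ℂ) • p + ((Real.sin (‖v‖ * t) / ‖v‖ : ℝ) : ℂ) • v)) :
    ∀ t, deriv γ t =
      (α * Real.cos (2 * c * t) + β * Real.sin (2 * c * t)) • Xf (γ t) +
      (β * Real.cos (2 * c * t) - α * Real.sin (2 * c * t)) • Yf (γ t) := by
  obtain rfl : Xf = frameX := funext fun q => WithLp.ofLp_injective 2 (hXf q)
  obtain rfl : Yf = fun q => I • frameX q := funext hYf
  obtain rfl : γ = fun t : ℝ => cexp (-(c * t) * I) • greatCircle p v t := funext hγ
  intro t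
  have hpv : inner ℂ p v = c * I := by rw [inner_eq_re_add_re_smul_I, htan, ← hc]; simp
  have hXv : inner ℂ (frameX p) v = α + β * I := by rw [inner_eq_re_add_re_smul_I, ← hα, ← hβ]
  have hv : v = (c * I) • p + (α + β * I) • frameX p := by
    simpa [hp, hpv, hXv] using norm_sq_smul_eq_inner_smul_add_inner_smul_frameX p v
  have hderiv := (hasDerivAt_greatCircle p v t).cexp_neg_mul_I_smul c
  rw [hderiv.deriv, velocity_sub_smul_greatCircle_eq_smul_frameX hp hv]
  dsimp only
  simp only [← Complex.coe_smul, frameX_smul, smul_smul, ← add_smul]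
  congr 1
  rw [← mul_assoc _ I, ← add_mul, ofReal_cos_add_sin_mul_I, ← exp_conj, mul_assoc, ← exp_add,
    mul_comm]
  congr 2
  simp only [map_mul, map_neg, conj_ofReal, conj_I]
  push_cast
  ring

/-- Decomposition of the velocity of an arc-length sub-Riemannian geodesic on `S³ ⊂ ℂ²` in the
horizontal orthonormal frame `X, Y`: `γ̇(t) = f_X(t) X(γ(t)) + f_Y(t) Y(γ(t))` with
`f_X(t) = α cos(2ct) + β sin(2ct)`, `f_Y(t) = β cos(2ct) − α sin(2ct)`.
In complex coordinates `X(q) = (-conj q₂, conj q₁)` and `Y(q) = i·X(q)`, which correspond to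
the real frame `X(p) = (-x₂,y₂,x₁,-y₁)`, `Y(p) = (-y₂,-x₂,y₁,x₁)`. -/
theorem s3_geodesic_velocity_frame (p v : EuclideanSpace ℂ (Fin 2)) (hp : ‖p‖ = 1)
    (htan : (inner ℂ v p : ℂ).re = 0)
    (Xf Yf : EuclideanSpace ℂ (Fin 2) → EuclideanSpace ℂ (Fin 2))
    (hXf : ∀ q, Xf q = ![-(starRingEnd ℂ) (q 1), (starRingEnd ℂ) (q 0)])
    (hYf : ∀ q, Yf q = Complex.I • Xf q)
    (c α β : ℝ)
    (hc : c = (inner ℂ v (Complex.I • p) : ℂ).re)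
    (hα : α = (inner ℂ v (Xf p) : ℂ).re)
    (hβ : β = (inner ℂ v (Yf p) : ℂ).re)
    (harc : ‖v‖ ^ 2 = 1 + c ^ 2)
    (γ : ℝ → EuclideanSpace ℂ (Fin 2))
    (hγ : ∀ t, γ t = Complex.exp (-(c * t) * Complex.I) •
      ((Real.cos (‖v‖ * t) : ℂ) • p + ((Real.sin (‖v‖ * t) / ‖v‖ : ℝ) : ℂ) • v)) :
    ∀ t, deriv γ t =
      (α * Real.cos (2 * c * t) + β * Real.sin (2 * c * t)) • Xf (γ t) +
      (β * Real.cos (2 * c * t) - α * Real.sin (2 * c * t)) • Yf (γ t) :=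
  s3_geodesic_velocity_frame_general p v hp htan Xf Yf hXf hYf c α β hc hα hβ γ hγ
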